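/- Let O be a complete DVR with uniformizer ϖ and residue field F, and let V be a group scheme situation abstracted as follows: let 1 → Z → V → V^{ad} → 1 be a central extension of groups with continuous action of a profinite group G, where Z is abelian. Suppose H²(G, Z(F̄_p)) = 0 and H¹(G, Z(Z̄_p)) surjects onto H¹(G, Z(F̄_p)) (reduction is surjective on H¹ of the center), and H²(G, Z(Z̄_p)) = 0. If c̄ ∈ H¹(G, V(F̄_p)) is a non-abelian cohomology class whose image ad(c̄) ∈ H¹(G, V^{ad}(F̄_p)) lifts to H¹(G, V^{ad}(Z̄_p)), then c̄ itself lifts to H¹(G, V(Z̄_p)). -/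

import Mathlib

section Defs

variable {G B : Type*} [Group G] [Group B] [MulDistribMulAction G B]

/-- A (possibly non-abelian) 1-cocycle of `G` valued in `B`. -/
def IsCocycle (c : G → B) : Prop := ∀ g h : G, c (g * h) = c g * g • c h

/-- Cohomologous 1-cocycles (twisted conjugation). -/
def Cohomologous (c c' : G → B) : Prop := ∃ b : B, ∀ g : G, c' g = b⁻¹ * c g * g • b

/-- A 2-cocycle of `G` valued in `B` (used for abelian `B`). -/
def Is2Cocycle (f : G → G → B) : Prop :=
  ∀ g h j : G, g • f h j * f g (h * j) = f (g * h) j * f g h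

/-- A 2-coboundary of `G` valued in `B`. -/
def Is2Coboundary (f : G → G → B) : Prop :=
  ∃ u : G → B, ∀ g h : G, f g h = u g * g • u h * (u (g * h))⁻¹

end Defs

/-!
Lift the class of `π₀ ∘ c̄` to a cocycle `a₁` valued in `A₁`. A set-theoretic lift of `a₁` to `V₁`
fails to be a cocycle by a central 2-cocycle; as `H²(G, Z₁) = 0` it is a coboundary, and correcting
by a primitive gives a cocycle `c` with `π₁ ∘ c = a₁`. The reduction of `c`, conjugated to have the
same image in `A₀` as `c̄`, differs from `c̄` by a central cocycle `z₀`. Lifting `z₀` to a cocycle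
`z₁` (surjectivity on `H¹` of the centre), the cocycle `(ι₁ ∘ z₁) · c` reduces into the class of `c̄`.
-/

section Cocycles

variable {G B C : Type*} [Group G] [Group B] [Group C]
  [MulDistribMulAction G B] [MulDistribMulAction G C]

theorem IsCocycle.map {c : G → B} (hc : IsCocycle c) (φ : B →* C)
    (hφ : ∀ (g : G) (x : B), φ (g • x) = g • φ x) : IsCocycle (fun g => φ (c g)) := by
  intro g h
  simp [hc g h, hφ]

theorem Cohomologous.isCocycle {c c' : G → B} (h : Cohomologous c c') (hc : IsCocycle c) :
    IsCocycle c' := by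
  obtain ⟨b, hb⟩ := h
  intro g h
  simp only [hb, hc g h, smul_mul', smul_inv', mul_smul]
  group

theorem Cohomologous.trans {c c' c'' : G → B} (h : Cohomologous c c')
    (h' : Cohomologous c' c'') : Cohomologous c c'' := by
  obtain ⟨b, hb⟩ := h
  obtain ⟨b', hb'⟩ := h'
  refine ⟨b * b', fun g => ?_⟩
  rw [hb', hb, smul_mul']
  group

end Cocycles

section CentralExtension

variable {G Z V A : Type*} [Group G] [CommGroup Z] [Group V] [Group A] [MulDistribMulAction G V]
  {ι : Z →* V}

theorem IsCocycle.centralMul [MulDistribMulAction G Z] (hcen : ∀ z, ι z ∈ Subgroup.center V)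
    (hι : ∀ (g : G) (z : Z), ι (g • z) = g • ι z) {z : G → Z} {c : G → V}
    (hz : IsCocycle z) (hc : IsCocycle c) : IsCocycle (fun g => ι (z g) * c g) := by
  intro g h
  have hcomm := Subgroup.mem_center_iff.mp (hcen (g • z h)) (c g)
  simp only [hz g h, hc g h, map_mul, smul_mul', ← hι, mul_assoc]
  rw [← mul_assoc (c g), hcomm, mul_assoc]

theorem Cohomologous.centralMul_left (hcen : ∀ z, ι z ∈ Subgroup.center V) (z : G → Z)
    {c c' : G → V} (h : Cohomologous c c') :
    Cohomologous (fun g => ι (z g) * c g) (fun g => ι (z g) * c' g) := by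
  obtain ⟨b, hb⟩ := h
  refine ⟨b, fun g => ?_⟩
  dsimp only
  rw [hb, ← mul_assoc b⁻¹, Subgroup.mem_center_iff.mp (hcen (z g)) b⁻¹]
  group

theorem Cohomologous.centralMul_right [MulDistribMulAction G Z]
    (hcen : ∀ z, ι z ∈ Subgroup.center V)
    (hι : ∀ (g : G) (z : Z), ι (g • z) = g • ι z) {z z' : G → Z} (h : Cohomologous z z')
    (c : G → V) : Cohomologous (fun g => ι (z g) * c g) (fun g => ι (z' g) * c g) := by
  obtain ⟨w, hw⟩ := h
  refine ⟨ι w, fun g => ?_⟩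
  dsimp only
  rw [hw, ← hι, ← map_inv, ← mul_assoc (ι w⁻¹), mul_assoc _ (c g),
    Subgroup.mem_center_iff.mp (hcen (g • w)) (c g)]
  simp only [map_mul, mul_assoc]


theorem exists_isCocycle_eq_centralMul [MulDistribMulAction G Z] {π : V →* A}
    (hinj : Function.Injective ι) (hexact : π.ker ≤ ι.range)
    (hcen : ∀ z, ι z ∈ Subgroup.center V) (hι : ∀ (g : G) (z : Z), ι (g • z) = g • ι z)
    {c c' : G → V} (hc : IsCocycle c) (hc' : IsCocycle c') (hπ : ∀ g, π (c g) = π (c' g)) :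
    ∃ z : G → Z, IsCocycle z ∧ ∀ g, c' g = ι (z g) * c g := by
  have hker : ∀ g, ∃ z, ι z = c' g * (c g)⁻¹ := fun g =>
    hexact (by rw [MonoidHom.mem_ker, map_mul, map_inv, hπ, mul_inv_cancel])
  choose z hz using hker
  have hz' : ∀ g, c' g = ι (z g) * c g := fun g => by rw [hz]; group
  refine ⟨z, fun g h => hinj (mul_right_cancel (b := c (g * h)) ?_), hz'⟩
  calc ι (z (g * h)) * c (g * h) = c' g * g • c' h := by rw [← hz', hc']
    _ = ι (z g) * c g * (ι (g • z h) * g • c h) := by rw [hz', hz', smul_mul', hι]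
    _ = ι (z g * g • z h) * c (g * h) := by
      rw [hc, map_mul, mul_assoc (ι (z g)), ← mul_assoc (c g),
        Subgroup.mem_center_iff.mp (hcen _) (c g)]
      simp only [mul_assoc]


section Obstruction

variable [MulDistribMulAction G Z] {v : G → V} {f : G → G → Z}

theorem is2Cocycle_of_mul_smul_eq (hinj : Function.Injective ι)
    (hcen : ∀ z, ι z ∈ Subgroup.center V) (hι : ∀ (g : G) (z : Z), ι (g • z) = g • ι z)
    (hvf : ∀ g h, v g * g • v h = ι (f g h) * v (g * h)) : Is2Cocycle f := by
  intro g h j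
  have assoc : v g * g • (v h * h • v j) = v g * g • v h * (g * h) • v j := by
    rw [smul_mul', mul_smul, mul_assoc]
  have left : v g * g • (v h * h • v j) = ι (g • f h j * f g (h * j)) * v (g * (h * j)) := by
    rw [hvf h j, smul_mul', ← hι, ← mul_assoc, Subgroup.mem_center_iff.mp (hcen _) (v g),
      mul_assoc, hvf, map_mul, mul_assoc]
  have right : v g * g • v h * (g * h) • v j = ι (f (g * h) j * f g h) * v (g * (h * j)) := by
    rw [hvf g h, mul_assoc, hvf, ← mul_assoc g h j, mul_comm (f (g * h) j), map_mul, ← mul_assoc]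
  exact hinj (mul_right_cancel (left.symm.trans (assoc.trans right)))

theorem isCocycle_centralMul_of_mul_smul_eq (hcen : ∀ z, ι z ∈ Subgroup.center V)
    (hι : ∀ (g : G) (z : Z), ι (g • z) = g • ι z)
    (hvf : ∀ g h, v g * g • v h = ι (f g h) * v (g * h)) {u : G → Z}
    (hu : ∀ g h, f g h = u g * g • u h * (u (g * h))⁻¹) :
    IsCocycle (fun g => ι (u g)⁻¹ * v g) := by
  intro g h
  have hcoeff : (u g)⁻¹ * g • (u h)⁻¹ * f g h = (u (g * h))⁻¹ := by
    rw [hu, smul_inv', mul_comm (u g)⁻¹]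
    group
  symm
  calc ι (u g)⁻¹ * v g * g • (ι (u h)⁻¹ * v h)
      = ι ((u g)⁻¹ * g • (u h)⁻¹) * (v g * g • v h) := by
        rw [smul_mul', ← hι, ← mul_assoc, mul_assoc _ (v g),
          Subgroup.mem_center_iff.mp (hcen _) (v g), map_mul]
        simp only [mul_assoc]
    _ = ι (u (g * h))⁻¹ * v (g * h) := by rw [hvf, ← mul_assoc, ← map_mul, hcoeff]

end Obstruction

theorem exists_isCocycle_lift [MulDistribMulAction G Z] [MulDistribMulAction G A] {π : V →* A}
    (hinj : Function.Injective ι) (hsurj : Function.Surjective π) (hexact : ι.range = π.ker)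
    (hcen : ∀ z, ι z ∈ Subgroup.center V) (hι : ∀ (g : G) (z : Z), ι (g • z) = g • ι z)
    (hπ : ∀ (g : G) (x : V), π (g • x) = g • π x)
    (hH2 : ∀ f : G → G → Z, Is2Cocycle f → Is2Coboundary f) {a : G → A} (ha : IsCocycle a) :
    ∃ c : G → V, IsCocycle c ∧ ∀ g, π (c g) = a g := by
  choose v hv using fun g => hsurj (a g)
  have hdefect : ∀ g h, ∃ z, ι z = v g * g • v h * (v (g * h))⁻¹ := fun g h =>
    hexact.ge (by
      rw [MonoidHom.mem_ker, map_mul, map_mul, map_inv, hπ, hv, hv, hv, ha g h, mul_inv_cancel])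
  choose f hf using hdefect
  have hvf : ∀ g h, v g * g • v h = ι (f g h) * v (g * h) := fun g h => by rw [hf]; group
  obtain ⟨u, hu⟩ := hH2 f (is2Cocycle_of_mul_smul_eq hinj hcen hι hvf)
  refine ⟨fun g => ι (u g)⁻¹ * v g, isCocycle_centralMul_of_mul_smul_eq hcen hι hvf hu,
    fun g => ?_⟩
  rw [map_mul, MonoidHom.mem_ker.mp (hexact.le ⟨_, rfl⟩), one_mul, hv]

end CentralExtension

theorem stmt17_general {G Z₁ V₁ A₁ Z₀ V₀ A₀ : Type*} [Group G]
    [CommGroup Z₁] [Group V₁] [Group A₁] [CommGroup Z₀] [Group V₀] [Group A₀]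
    [MulDistribMulAction G Z₁] [MulDistribMulAction G V₁] [MulDistribMulAction G A₁]
    [MulDistribMulAction G Z₀] [MulDistribMulAction G V₀] [MulDistribMulAction G A₀]
    (ι₁ : Z₁ →* V₁) (π₁ : V₁ →* A₁) (ι₀ : Z₀ →* V₀) (π₀ : V₀ →* A₀)
    (hι₁inj : Function.Injective ι₁) (hπ₁surj : Function.Surjective π₁)
    (hexact₁ : ι₁.range = π₁.ker)
    (hcentral₁ : ∀ z : Z₁, ι₁ z ∈ Subgroup.center V₁)
    (hι₀inj : Function.Injective ι₀) (hπ₀surj : Function.Surjective π₀)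
    (hexact₀ : ι₀.range = π₀.ker)
    (hcentral₀ : ∀ z : Z₀, ι₀ z ∈ Subgroup.center V₀)
    (hι₁eq : ∀ (g : G) (z : Z₁), ι₁ (g • z) = g • ι₁ z)
    (hπ₁eq : ∀ (g : G) (v : V₁), π₁ (g • v) = g • π₁ v)
    (hι₀eq : ∀ (g : G) (z : Z₀), ι₀ (g • z) = g • ι₀ z)
    (hπ₀eq : ∀ (g : G) (v : V₀), π₀ (g • v) = g • π₀ v)
    (rZ : Z₁ →* Z₀) (rV : V₁ →* V₀) (rA : A₁ →* A₀)
    (hrVeq : ∀ (g : G) (v : V₁), rV (g • v) = g • rV v)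
    (hcomm₁ : ∀ z : Z₁, rV (ι₁ z) = ι₀ (rZ z))
    (hcomm₂ : ∀ v : V₁, rA (π₁ v) = π₀ (rV v))
    -- reduction is surjective on `H¹` of the center:
    (hH1surj : ∀ c₀ : G → Z₀, IsCocycle c₀ →
      ∃ c₁ : G → Z₁, IsCocycle c₁ ∧ Cohomologous (fun g => rZ (c₁ g)) c₀)
    -- `H²(G, Z(Z̄_p)) = 0`:
    (hH2Z₁ : ∀ f : G → G → Z₁, Is2Cocycle f → Is2Coboundary f)
    (cbar : G → V₀) (hcbar : IsCocycle cbar)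
    (hlift : ∃ a₁ : G → A₁, IsCocycle a₁ ∧
      Cohomologous (fun g => rA (a₁ g)) (fun g => π₀ (cbar g))) :
    ∃ c₁ : G → V₁, IsCocycle c₁ ∧ Cohomologous (fun g => rV (c₁ g)) cbar := by
  obtain ⟨a₁, ha₁, b₀, hb₀⟩ := hlift
  obtain ⟨c, hc, hπc⟩ :=
    exists_isCocycle_lift hι₁inj hπ₁surj hexact₁ hcentral₁ hι₁eq hπ₁eq hH2Z₁ ha₁
  obtain ⟨β, rfl⟩ := hπ₀surj b₀
  set d : G → V₀ := fun g => β⁻¹ * rV (c g) * g • β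
  have hcd : Cohomologous (fun g => rV (c g)) d := ⟨β, fun _ => rfl⟩
  have hπd : ∀ g, π₀ (d g) = π₀ (cbar g) := fun g => by
    simp only [d, hb₀ g, map_mul, map_inv, hπ₀eq, ← hcomm₂, hπc]
  obtain ⟨z₀, hz₀, hcbar_eq⟩ := exists_isCocycle_eq_centralMul hι₀inj hexact₀.ge hcentral₀
    hι₀eq (hcd.isCocycle (hc.map rV hrVeq)) hcbar hπd
  obtain ⟨z₁, hz₁, hz₁₀⟩ := hH1surj z₀ hz₀
  refine ⟨fun g => ι₁ (z₁ g) * c g, hz₁.centralMul hcentral₁ hι₁eq hc, ?_⟩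
  simp only [map_mul, hcomm₁]
  rw [funext hcbar_eq]
  exact (hcd.centralMul_left hcentral₀ _).trans (hz₁₀.centralMul_right hcentral₀ hι₀eq d)

/-- Lifting through a central extension.  Let `1 → Z → V → V^ad → 1` be a central extension
of `G`-groups at an "integral" level (`Z₁ → V₁ → A₁`, modeling `Z̄_p`-points) and a
"residual" level (`Z₀ → V₀ → A₀`, modeling `F̄_p`-points), with equivariant reduction maps
between them.  Assume `H²(G, Z₀) = 0` (every 2-cocycle is a coboundary), that reduction
`H¹(G, Z₁) → H¹(G, Z₀)` is surjective, and `H²(G, Z₁) = 0`.  If a non-abelian class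
`c̄ ∈ H¹(G, V₀)` is such that its image in `H¹(G, A₀)` lifts to `H¹(G, A₁)`, then `c̄`
itself lifts to `H¹(G, V₁)`. -/
theorem stmt17 {G Z₁ V₁ A₁ Z₀ V₀ A₀ : Type*} [Group G]
    [CommGroup Z₁] [Group V₁] [Group A₁] [CommGroup Z₀] [Group V₀] [Group A₀]
    [MulDistribMulAction G Z₁] [MulDistribMulAction G V₁] [MulDistribMulAction G A₁]
    [MulDistribMulAction G Z₀] [MulDistribMulAction G V₀] [MulDistribMulAction G A₀]
    (ι₁ : Z₁ →* V₁) (π₁ : V₁ →* A₁) (ι₀ : Z₀ →* V₀) (π₀ : V₀ →* A₀)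
    (hι₁inj : Function.Injective ι₁) (hπ₁surj : Function.Surjective π₁)
    (hexact₁ : ι₁.range = π₁.ker)
    (hcentral₁ : ∀ z : Z₁, ι₁ z ∈ Subgroup.center V₁)
    (hι₀inj : Function.Injective ι₀) (hπ₀surj : Function.Surjective π₀)
    (hexact₀ : ι₀.range = π₀.ker)
    (hcentral₀ : ∀ z : Z₀, ι₀ z ∈ Subgroup.center V₀)
    (hι₁eq : ∀ (g : G) (z : Z₁), ι₁ (g • z) = g • ι₁ z)
    (hπ₁eq : ∀ (g : G) (v : V₁), π₁ (g • v) = g • π₁ v)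
    (hι₀eq : ∀ (g : G) (z : Z₀), ι₀ (g • z) = g • ι₀ z)
    (hπ₀eq : ∀ (g : G) (v : V₀), π₀ (g • v) = g • π₀ v)
    (rZ : Z₁ →* Z₀) (rV : V₁ →* V₀) (rA : A₁ →* A₀)
    (hrZeq : ∀ (g : G) (z : Z₁), rZ (g • z) = g • rZ z)
    (hrVeq : ∀ (g : G) (v : V₁), rV (g • v) = g • rV v)
    (hrAeq : ∀ (g : G) (a : A₁), rA (g • a) = g • rA a)
    (hcomm₁ : ∀ z : Z₁, rV (ι₁ z) = ι₀ (rZ z))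
    (hcomm₂ : ∀ v : V₁, rA (π₁ v) = π₀ (rV v))
    -- `H²(G, Z(F̄_p)) = 0`:
    (hH2Z₀ : ∀ f : G → G → Z₀, Is2Cocycle f → Is2Coboundary f)
    -- reduction is surjective on `H¹` of the center:
    (hH1surj : ∀ c₀ : G → Z₀, IsCocycle c₀ →
      ∃ c₁ : G → Z₁, IsCocycle c₁ ∧ Cohomologous (fun g => rZ (c₁ g)) c₀)
    -- `H²(G, Z(Z̄_p)) = 0`:
    (hH2Z₁ : ∀ f : G → G → Z₁, Is2Cocycle f → Is2Coboundary f)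
    (cbar : G → V₀) (hcbar : IsCocycle cbar)
    (hlift : ∃ a₁ : G → A₁, IsCocycle a₁ ∧
      Cohomologous (fun g => rA (a₁ g)) (fun g => π₀ (cbar g))) :
    ∃ c₁ : G → V₁, IsCocycle c₁ ∧ Cohomologous (fun g => rV (c₁ g)) cbar :=
  stmt17_general ι₁ π₁ ι₀ π₀ hι₁inj hπ₁surj hexact₁ hcentral₁ hι₀inj hπ₀surj hexact₀ hcentral₀ hι₁eq
    hπ₁eq hι₀eq hπ₀eq rZ rV rA hrVeq hcomm₁ hcomm₂ hH1surj hH2Z₁ cbar hcbar hlift
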